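/- For every ε > 0, every d, and every p, there is a constant c = c(ε, d) such that for every finite metric space (or finite subset A ⊆ ℝ^d) of n points, β_p(VR_1(A), VR_{1+ε}(A)) ≤ c·n, where VR_r denotes the Vietoris–Rips complex at scale r for points in ℝ^d. -/

import Mathlib

attribute [local instance] Classical.propDecidable

/-- The mod-2 simplicial boundary operator on formal sums of finite vertex sets. -/
noncomputable def bdry (V : Type*) [DecidableEq V] :
    (Finset V →₀ ZMod 2) →ₗ[ZMod 2] (Finset V →₀ ZMod 2) :=
  Finsupp.lsum (ZMod 2) fun σ =>
    LinearMap.toSpanSingleton (ZMod 2) _ (∑ v ∈ σ, Finsupp.single (σ.erase v) (1 : ZMod 2))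

/-- Chains supported on the `p`-simplices (sets of `p+1` vertices) of `K`. -/
noncomputable def chainsIn {V : Type*} (K : Set (Finset V)) (p : ℕ) :
    Submodule (ZMod 2) (Finset V →₀ ZMod 2) :=
  Finsupp.supported (ZMod 2) (ZMod 2) {σ | σ ∈ K ∧ σ.card = p + 1}

noncomputable def cyclesIn {V : Type*} [DecidableEq V] (K : Set (Finset V)) (p : ℕ) :
    Submodule (ZMod 2) (Finset V →₀ ZMod 2) :=
  chainsIn K p ⊓ LinearMap.ker (bdry V)

noncomputable def bdriesIn {V : Type*} [DecidableEq V] (K : Set (Finset V)) (p : ℕ) :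
    Submodule (ZMod 2) (Finset V →₀ ZMod 2) :=
  Submodule.map (bdry V) (chainsIn K (p + 1))

/-- The `p`-th persistent Betti number of `K ⊆ L`: the rank of the image of
`H_p(K) → H_p(L)`, computed as `Z_p(K) / (Z_p(K) ∩ B_p(L))`. -/
noncomputable def pBetti {V : Type*} [DecidableEq V] (K L : Set (Finset V)) (p : ℕ) : Cardinal :=
  Module.rank (ZMod 2) ↥(Submodule.map (bdriesIn L p).mkQ (cyclesIn K p))

noncomputable def betti {V : Type*} [DecidableEq V] (K : Set (Finset V)) (p : ℕ) : Cardinal :=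
  pBetti K K p

/-- Pushforward of a `p`-chain along a vertex map; degenerate simplices are dropped and
coinciding images cancel mod 2. -/
noncomputable def pushChain {V W : Type*} [DecidableEq V] [DecidableEq W]
    (q : V → W) (p : ℕ) (c : Finset V →₀ ZMod 2) : Finset W →₀ ZMod 2 :=
  Finsupp.filter (fun τ => τ.card = p + 1)
    (Finsupp.mapDomain (fun σ : Finset V => σ.image q) c)

/-- Gluing vertices `x` and `y` of a `p`-chain to a new vertex `z`. -/
noncomputable def glueChain {V : Type*} [DecidableEq V] (x y z : V) (p : ℕ)
    (c : Finset V →₀ ZMod 2) : Finset V →₀ ZMod 2 :=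
  pushChain (fun v => if v = x ∨ v = y then z else v) p c

/-- The star of a vertex in a chain: the simplices of the chain containing it. -/
noncomputable def starChain {V : Type*} (x : V) (c : Finset V →₀ ZMod 2) :
    Finset V →₀ ZMod 2 :=
  Finsupp.filter (fun σ => x ∈ σ) c

/-- The cone over a chain with apex `z`. -/
noncomputable def coneChain {V : Type*} [DecidableEq V] (z : V) (c : Finset V →₀ ZMod 2) :
    Finset V →₀ ZMod 2 :=
  Finsupp.mapDomain (insert z) c

/-- The Vietoris--Rips complex of `A ⊆ ℝ^d` at scale `r`: nonempty subsets of `A` with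
pairwise distances at most `2r`. -/
def vr (d : ℕ) (r : ℝ) (A : Finset (EuclideanSpace ℝ (Fin d))) :
    Set (Finset (EuclideanSpace ℝ (Fin d))) :=
  {B | B.Nonempty ∧ ↑B ⊆ (↑A : Set (EuclideanSpace ℝ (Fin d))) ∧
    ∀ x ∈ B, ∀ y ∈ B, dist x y ≤ 2 * r}

set_option linter.unusedSectionVars false
set_option maxHeartbeats 1000000 in
section
end
section Chains
variable {V : Type*} [DecidableEq V]

noncomputable def pushL (f : V → V) (p : ℕ) :
    (Finset V →₀ ZMod 2) →ₗ[ZMod 2] (Finset V →₀ ZMod 2) :=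
  Finsupp.lsum (ZMod 2) fun σ =>
    LinearMap.toSpanSingleton (ZMod 2) _
      (if (σ.image f).card = p + 1 then Finsupp.single (σ.image f) (1 : ZMod 2) else 0)

noncomputable def homL (x y : V) :
    (Finset V →₀ ZMod 2) →ₗ[ZMod 2] (Finset V →₀ ZMod 2) :=
  Finsupp.lsum (ZMod 2) fun σ =>
    LinearMap.toSpanSingleton (ZMod 2) _
      (if x ∈ σ ∧ y ∉ σ then Finsupp.single (insert y σ) (1 : ZMod 2) else 0)

lemma bdry_single (σ : Finset V) (b : ZMod 2) :
    bdry V (Finsupp.single σ b) = b • ∑ v ∈ σ, Finsupp.single (σ.erase v) (1 : ZMod 2) := by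
  simp [bdry, Finsupp.lsum_single, LinearMap.toSpanSingleton_apply]

lemma pushL_single (f : V → V) (p : ℕ) (σ : Finset V) (b : ZMod 2) :
    pushL f p (Finsupp.single σ b)
      = b • (if (σ.image f).card = p + 1 then Finsupp.single (σ.image f) (1 : ZMod 2) else 0) := by
  simp [pushL, Finsupp.lsum_single, LinearMap.toSpanSingleton_apply]

lemma homL_single (x y : V) (σ : Finset V) (b : ZMod 2) :
    homL x y (Finsupp.single σ b)
      = b • (if x ∈ σ ∧ y ∉ σ then Finsupp.single (insert y σ) (1 : ZMod 2) else 0) := by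
  simp [homL, Finsupp.lsum_single, LinearMap.toSpanSingleton_apply]

lemma addself (u : Finset V →₀ ZMod 2) : u + u = 0 := by
  rw [← two_smul (ZMod 2) u, show (2 : ZMod 2) = 0 by decide, zero_smul]

lemma negeq (u : Finset V →₀ ZMod 2) : -u = u := by
  rw [neg_eq_iff_add_eq_zero, addself]

lemma key_single (x y : V) (p : ℕ) (σ : Finset V) (hσ : σ.card = p + 1) :
    bdry V (homL x y (Finsupp.single σ (1 : ZMod 2)))
      = Finsupp.single σ 1
        + pushL (fun v => if v = x then y else v) p (Finsupp.single σ (1 : ZMod 2))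
        + homL x y (bdry V (Finsupp.single σ (1 : ZMod 2))) := by
  set f : V → V := fun v => if v = x then y else v with hf
  by_cases hx : x ∈ σ
  · by_cases hy : y ∈ σ
    · -- x,y ∈ σ
      have h1 : homL x y (Finsupp.single σ (1 : ZMod 2)) = 0 := by
        rw [homL_single, if_neg (by tauto), smul_zero]
      by_cases hxy : y = x
      · -- y = x : push is the identity
        subst hxy
        have himg : σ.image f = σ := by
          rw [show σ.image f = σ.image id from Finset.image_congr (by
            intro v hv; by_cases h : v = y <;> simp [hf, h]), Finset.image_id]
        have h2 : pushL f p (Finsupp.single σ (1 : ZMod 2)) = Finsupp.single σ 1 := by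
          rw [pushL_single, himg, if_pos hσ, one_smul]
        have h3 : homL y y (bdry V (Finsupp.single σ (1 : ZMod 2))) = 0 := by
          rw [bdry_single, one_smul, map_sum]
          apply Finset.sum_eq_zero
          intro v hv
          rw [homL_single, if_neg (by tauto), smul_zero]
        rw [h1, h2, h3, map_zero, add_zero, addself]
      · -- y ∈ σ, y ≠ x
        have h2 : pushL f p (Finsupp.single σ (1 : ZMod 2)) = 0 := by
          have himg : σ.image f = σ.erase x := by
            ext w
            simp only [Finset.mem_image, Finset.mem_erase, hf]
            constructor
            · rintro ⟨v, hv, rfl⟩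
              by_cases h : v = x
              · simp only [h, if_pos rfl]; exact ⟨hxy, hy⟩
              · simp only [if_neg h]; exact ⟨h, hv⟩
            · rintro ⟨hwx, hwσ⟩; exact ⟨w, hwσ, by simp [if_neg hwx]⟩
          rw [pushL_single, himg,
            if_neg (by rw [Finset.card_erase_of_mem hx, hσ]; omega), smul_zero]
        have h3 : homL x y (bdry V (Finsupp.single σ (1 : ZMod 2))) = Finsupp.single σ 1 := by
          rw [bdry_single, one_smul, map_sum]
          have hterm : ∀ v ∈ σ, homL x y (Finsupp.single (σ.erase v) (1 : ZMod 2))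
              = if v = y then Finsupp.single (insert y (σ.erase v)) (1 : ZMod 2) else 0 := by
            intro v hv
            rw [homL_single, one_smul]
            by_cases h : v = y
            · subst h
              rw [if_pos, if_pos rfl]
              exact ⟨Finset.mem_erase.mpr ⟨fun hc => hxy hc.symm, hx⟩, Finset.notMem_erase v σ⟩
            · rw [if_neg, if_neg h]
              rintro ⟨h1', h2'⟩
              exact h2' (Finset.mem_erase.mpr ⟨fun hc => h hc.symm, hy⟩)
          rw [Finset.sum_congr rfl hterm, Finset.sum_ite_eq' σ y
            (fun v => Finsupp.single (insert y (σ.erase v)) (1 : ZMod 2)), if_pos hy,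
            Finset.insert_erase hy]
        rw [h1, h2, h3, map_zero, add_zero]
        exact (addself _).symm
    · -- x ∈ σ, y ∉ σ
      have hxy : y ≠ x := fun h => hy (h ▸ hx)
      have hynotx : y ∉ σ.erase x := fun h => hy (Finset.mem_of_mem_erase h)
      have h1 : homL x y (Finsupp.single σ (1 : ZMod 2))
          = Finsupp.single (insert y σ) (1 : ZMod 2) := by
        rw [homL_single, if_pos ⟨hx, hy⟩, one_smul]
      have himg : σ.image f = insert y (σ.erase x) := by
        ext w
        simp only [Finset.mem_image, Finset.mem_insert, Finset.mem_erase, hf]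
        constructor
        · rintro ⟨v, hv, rfl⟩
          by_cases h : v = x
          · simp [h]
          · simp only [if_neg h]; exact Or.inr ⟨h, hv⟩
        · rintro (rfl | ⟨hwx, hwσ⟩)
          · exact ⟨x, hx, by simp⟩
          · exact ⟨w, hwσ, by simp [if_neg hwx]⟩
      have h2 : pushL f p (Finsupp.single σ (1 : ZMod 2))
          = Finsupp.single (insert y (σ.erase x)) (1 : ZMod 2) := by
        rw [pushL_single, himg, if_pos, one_smul]
        rw [Finset.card_insert_of_notMem hynotx, Finset.card_erase_of_mem hx, hσ]
        omega
      -- LHS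
      have hLHS : bdry V (Finsupp.single (insert y σ) (1 : ZMod 2))
          = Finsupp.single σ 1
            + ∑ v ∈ σ, Finsupp.single (insert y (σ.erase v)) (1 : ZMod 2) := by
        rw [bdry_single, one_smul, Finset.sum_insert hy, Finset.erase_insert hy]
        congr 1
        apply Finset.sum_congr rfl
        intro v hv
        rw [Finset.erase_insert_of_ne (by rintro rfl; exact hy hv)]
      -- RHS homL ∘ bdry
      have h3 : homL x y (bdry V (Finsupp.single σ (1 : ZMod 2)))
          = ∑ v ∈ σ.erase x, Finsupp.single (insert y (σ.erase v)) (1 : ZMod 2) := by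
        rw [bdry_single, one_smul, map_sum]
        have hterm : ∀ v ∈ σ, homL x y (Finsupp.single (σ.erase v) (1 : ZMod 2))
            = if v = x then 0 else Finsupp.single (insert y (σ.erase v)) (1 : ZMod 2) := by
          intro v hv
          rw [homL_single, one_smul]
          by_cases h : v = x
          · rw [if_pos h, if_neg]
            rintro ⟨h1', _⟩
            exact (Finset.mem_erase.mp h1').1 (h ▸ rfl)
          · rw [if_neg h, if_pos]
            exact ⟨Finset.mem_erase.mpr ⟨fun hc => h hc.symm, hx⟩,
              fun hc => hy (Finset.mem_of_mem_erase hc)⟩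
        rw [Finset.sum_congr rfl hterm, ← Finset.sum_erase σ (by rw [if_pos rfl])]
        apply Finset.sum_congr rfl
        intro v hv
        rw [if_neg (Finset.mem_erase.mp hv).1]
      rw [h1, hLHS, h2, h3,
        ← Finset.add_sum_erase σ (fun v => Finsupp.single (insert y (σ.erase v)) (1 : ZMod 2)) hx]
      abel
  · -- x ∉ σ
    have h1 : homL x y (Finsupp.single σ (1 : ZMod 2)) = 0 := by
      rw [homL_single, if_neg (by tauto), smul_zero]
    have h2 : pushL f p (Finsupp.single σ (1 : ZMod 2)) = Finsupp.single σ 1 := by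
      have himg : σ.image f = σ := by
        rw [show σ.image f = σ.image id from Finset.image_congr (by
          intro v hv; simp only [hf, id]; rw [if_neg (by rintro rfl; exact hx hv)]), Finset.image_id]
      rw [pushL_single, himg, if_pos hσ, one_smul]
    have h3 : homL x y (bdry V (Finsupp.single σ (1 : ZMod 2))) = 0 := by
      rw [bdry_single, one_smul, map_sum]
      apply Finset.sum_eq_zero
      intro v hv
      rw [homL_single, if_neg, smul_zero]
      rintro ⟨h1', _⟩
      exact hx (Finset.mem_of_mem_erase h1')
    rw [h1, h2, h3, map_zero, add_zero]
    exact (addself _).symm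
lemma bdry_bdry (c : Finset V →₀ ZMod 2) : bdry V (bdry V c) = 0 := by
  have h : (bdry V).comp (bdry V) = 0 := by
    apply Finsupp.lhom_ext
    intro σ b
    rw [LinearMap.comp_apply, bdry_single, map_smul, map_sum]
    have : ∑ v ∈ σ, bdry V (Finsupp.single (σ.erase v) (1 : ZMod 2)) = 0 := by
      simp_rw [bdry_single, one_smul]
      rw [Finset.sum_sigma']
      refine Finset.sum_involution (fun a _ => ⟨a.2, a.1⟩) ?_ ?_ ?_ ?_
      · intro a ha
        simp only [Finset.mem_sigma, Finset.mem_erase] at ha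
        rw [Finset.erase_right_comm, ← Finsupp.single_add,
          show (1 + 1 : ZMod 2) = 0 by decide, Finsupp.single_zero]
      · intro a ha _
        simp only [Finset.mem_sigma, Finset.mem_erase] at ha
        intro hcontra
        have : a.2 = a.1 := congrArg Sigma.fst hcontra
        exact ha.2.1 this
      · intro a ha
        simp only [Finset.mem_sigma, Finset.mem_erase] at ha ⊢
        exact ⟨ha.2.2, fun h => ha.2.1 h.symm, ha.1⟩
      · intro a _
        rfl
    rw [this, smul_zero]
    rfl
  exact DFunLike.congr_fun (h) c |>.trans rfl


end Chains
section Chains2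
variable {V : Type*} [DecidableEq V]

lemma key_chain (x y : V) (p : ℕ) (c : Finset V →₀ ZMod 2)
    (hc : ∀ σ ∈ c.support, σ.card = p + 1) :
    bdry V (homL x y c)
      = c + pushL (fun v => if v = x then y else v) p c + homL x y (bdry V c) := by
  induction c using Finsupp.induction with
  | zero => simp
  | single_add σ b g hσg hb ih =>
    have hsupp : (Finsupp.single σ b + g).support = insert σ g.support := by
      rw [Finsupp.support_add_eq, Finsupp.support_single_ne_zero σ hb, Finset.insert_eq]
      rw [Finsupp.support_single_ne_zero σ hb]
      simp [Finset.disjoint_singleton_left, hσg]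
    have hσcard : σ.card = p + 1 := hc σ (by rw [hsupp]; exact Finset.mem_insert_self σ g.support)
    have hg : ∀ τ ∈ g.support, τ.card = p + 1 :=
      fun τ hτ => hc τ (by rw [hsupp]; exact Finset.mem_insert_of_mem hτ)
    have hsmul : Finsupp.single σ b = b • Finsupp.single σ (1 : ZMod 2) := by
      rw [Finsupp.smul_single, smul_eq_mul, mul_one]
    have hb1 : bdry V (homL x y (Finsupp.single σ b))
        = Finsupp.single σ b
          + pushL (fun v => if v = x then y else v) p (Finsupp.single σ b)
          + homL x y (bdry V (Finsupp.single σ b)) := by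
      rw [hsmul]
      simp only [map_smul]
      rw [key_single x y p σ hσcard, smul_add, smul_add]
    simp only [map_add]
    rw [ih hg, hb1]
    abel

lemma pushL_id (p : ℕ) (c : Finset V →₀ ZMod 2)
    (hc : ∀ σ ∈ c.support, σ.card = p + 1) : pushL id p c = c := by
  induction c using Finsupp.induction with
  | zero => simp
  | single_add σ b g hσg hb ih =>
    have hsupp : (Finsupp.single σ b + g).support = insert σ g.support := by
      rw [Finsupp.support_add_eq, Finsupp.support_single_ne_zero σ hb, Finset.insert_eq]
      rw [Finsupp.support_single_ne_zero σ hb]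
      simp [Finset.disjoint_singleton_left, hσg]
    have hσcard : σ.card = p + 1 := hc σ (by rw [hsupp]; exact Finset.mem_insert_self σ g.support)
    have hg : ∀ τ ∈ g.support, τ.card = p + 1 :=
      fun τ hτ => hc τ (by rw [hsupp]; exact Finset.mem_insert_of_mem hτ)
    rw [map_add, ih hg, pushL_single, Finset.image_id, if_pos hσcard]
    congr 1
    rw [Finsupp.smul_single, smul_eq_mul, mul_one]

lemma pushL_pushL (f g : V → V) (p : ℕ) (c : Finset V →₀ ZMod 2)
    (hc : ∀ σ ∈ c.support, σ.card = p + 1) :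
    pushL g p (pushL f p c) = pushL (g ∘ f) p c := by
  induction c using Finsupp.induction with
  | zero => simp
  | single_add σ b h hσg hb ih =>
    have hsupp : (Finsupp.single σ b + h).support = insert σ h.support := by
      rw [Finsupp.support_add_eq, Finsupp.support_single_ne_zero σ hb, Finset.insert_eq]
      rw [Finsupp.support_single_ne_zero σ hb]
      simp [Finset.disjoint_singleton_left, hσg]
    have hσcard : σ.card = p + 1 := hc σ (by rw [hsupp]; exact Finset.mem_insert_self σ h.support)
    have hg : ∀ τ ∈ h.support, τ.card = p + 1 :=
      fun τ hτ => hc τ (by rw [hsupp]; exact Finset.mem_insert_of_mem hτ)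
    simp only [map_add]
    rw [ih hg]
    congr 1
    rw [pushL_single, pushL_single]
    by_cases hcase : (σ.image f).card = p + 1
    · rw [if_pos hcase, map_smul, pushL_single, one_smul, Finset.image_image]
    · rw [if_neg hcase, smul_zero, map_zero]
      have : (σ.image (g ∘ f)).card ≠ p + 1 := by
        rw [← Finset.image_image]
        have h1 : ((σ.image f).image g).card ≤ (σ.image f).card := Finset.card_image_le
        have h2 : (σ.image f).card ≤ σ.card := Finset.card_image_le
        omega
      rw [if_neg this, smul_zero]

lemma pushL_support (f : V → V) (p : ℕ) (c : Finset V →₀ ZMod 2) :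
    ∀ τ ∈ (pushL f p c).support, ∃ σ ∈ c.support, τ = σ.image f ∧ τ.card = p + 1 := by
  intro τ hτ
  have heq : pushL f p c = c.sum (fun σ b =>
      b • (if (σ.image f).card = p + 1 then Finsupp.single (σ.image f) (1 : ZMod 2) else 0)) := rfl
  rw [heq] at hτ
  obtain ⟨σ, hσ, hmem⟩ := Finset.mem_biUnion.mp (Finsupp.support_sum hτ)
  refine ⟨σ, hσ, ?_⟩
  by_cases h : (σ.image f).card = p + 1
  · rw [if_pos h] at hmem
    have h1 := Finsupp.support_smul hmem
    have h2 := Finsupp.support_single_subset h1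
    rw [Finset.mem_singleton] at h2
    exact ⟨h2, h2 ▸ h⟩
  · rw [if_neg h, smul_zero] at hmem
    simp at hmem

lemma homL_support (x y : V) (c : Finset V →₀ ZMod 2) :
    ∀ τ ∈ (homL x y c).support, ∃ σ ∈ c.support, x ∈ σ ∧ y ∉ σ ∧ τ = insert y σ := by
  intro τ hτ
  have heq : homL x y c = c.sum (fun σ b =>
      b • (if x ∈ σ ∧ y ∉ σ then Finsupp.single (insert y σ) (1 : ZMod 2) else 0)) := rfl
  rw [heq] at hτ
  obtain ⟨σ, hσ, hmem⟩ := Finset.mem_biUnion.mp (Finsupp.support_sum hτ)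
  refine ⟨σ, hσ, ?_⟩
  by_cases h : x ∈ σ ∧ y ∉ σ
  · rw [if_pos h] at hmem
    have h1 := Finsupp.support_smul hmem
    have h2 := Finsupp.support_single_subset h1
    rw [Finset.mem_singleton] at h2
    exact ⟨h.1, h.2, h2⟩
  · rw [if_neg h, smul_zero] at hmem
    simp at hmem

noncomputable def glueMap (q : V → V) : List V → V → V
  | [] => id
  | a :: l => fun v => glueMap q l (if v = a then q a else v)

lemma glueMap_fixed (q : V → V) (l : List V) (w : V) (hw : q w = w) : glueMap q l w = w := by
  induction l with
  | nil => rfl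
  | cons a l ih =>
    show glueMap q l (if w = a then q a else w) = w
    by_cases h : w = a
    · rw [if_pos h, ← h, hw]; exact ih
    · rw [if_neg h]; exact ih

lemma glueMap_eq (q : V → V) (l : List V) (hq : ∀ b ∈ l, q (q b) = q b) (v : V) (hv : v ∈ l) :
    glueMap q l v = q v := by
  induction l with
  | nil => cases hv
  | cons a l ih =>
    show glueMap q l (if v = a then q a else v) = q v
    by_cases h : v = a
    · subst h
      rw [if_pos rfl]
      exact glueMap_fixed q l (q v) (hq v List.mem_cons_self)
    · rw [if_neg h]
      exact ih (fun b hb => hq b (List.mem_cons_of_mem a hb))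
        ((List.mem_cons.mp hv).resolve_left h)

lemma glue_homotopy (q : V → V) (L : Set (Finset V)) (P : Finset V → Prop) (p : ℕ)
    (l : List V)
    (hP1 : ∀ a ∈ l, ∀ σ : Finset V, P σ → P (σ.image (fun v => if v = a then q a else v)))
    (hP2 : ∀ a ∈ l, ∀ σ : Finset V, P σ → a ∈ σ → q a ∉ σ → insert (q a) σ ∈ L)
    (c : Finset V →₀ ZMod 2) (hcyc : bdry V c = 0)
    (hsupp : ∀ σ ∈ c.support, σ.card = p + 1 ∧ P σ) :
    ∃ w ∈ chainsIn L (p + 1), pushL (glueMap q l) p c + c = bdry V w := by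
  induction l generalizing c with
  | nil =>
    refine ⟨0, zero_mem _, ?_⟩
    rw [map_zero, show glueMap q [] = id from rfl, pushL_id p c (fun σ h => (hsupp σ h).1),
      addself]
  | cons a l ih =>
    have hkey := key_chain a (q a) p c (fun σ h => (hsupp σ h).1)
    rw [hcyc, map_zero, add_zero] at hkey
    set c' := pushL (fun v => if v = a then q a else v) p c with hc'
    have hc'cyc : bdry V c' = 0 := by
      have h2 : bdry V (c + c') = 0 := by rw [← hkey, bdry_bdry]
      rw [map_add, hcyc, zero_add] at h2
      exact h2
    have hc'supp : ∀ σ ∈ c'.support, σ.card = p + 1 ∧ P σ := by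
      intro τ hτ
      obtain ⟨σ, hσ, rfl, hcard⟩ := pushL_support _ p c τ hτ
      exact ⟨hcard, hP1 a List.mem_cons_self σ (hsupp σ hσ).2⟩
    obtain ⟨w', hw', hw'eq⟩ := ih
      (fun b hb => hP1 b (List.mem_cons_of_mem a hb))
      (fun b hb => hP2 b (List.mem_cons_of_mem a hb)) c' hc'cyc hc'supp
    have hcomp : pushL (glueMap q (a :: l)) p c = pushL (glueMap q l) p c' := by
      rw [hc', pushL_pushL _ _ p c (fun σ h => (hsupp σ h).1)]
      rfl
    have hh : homL a (q a) c ∈ chainsIn L (p + 1) := by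
      rw [chainsIn, Finsupp.mem_supported]
      intro τ hτ
      obtain ⟨σ, hσ, hain, hqout, rfl⟩ := homL_support a (q a) c τ hτ
      refine ⟨hP2 a List.mem_cons_self σ (hsupp σ hσ).2 hain hqout, ?_⟩
      rw [Finset.card_insert_of_notMem hqout, (hsupp σ hσ).1]
    refine ⟨w' + homL a (q a) c, add_mem hw' hh, ?_⟩
    rw [map_add, ← hw'eq, hkey, hcomp]
    have h9 : pushL (glueMap q l) p c' + c' + (c + c')
        = pushL (glueMap q l) p c' + c + (c' + c') := by abel
    rw [h9, addself, add_zero]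

end Chains2

section Geometry
variable {d : ℕ}

lemma coord_le_dist (u v : EuclideanSpace ℝ (Fin d)) (i : Fin d) :
    |u i - v i| ≤ dist u v := by
  rw [EuclideanSpace.dist_eq, ← Real.dist_eq]
  have h1 : dist (u i) (v i) = Real.sqrt (dist (u i) (v i) ^ 2) := by
    rw [Real.sqrt_sq dist_nonneg]
  rw [h1]
  apply Real.sqrt_le_sqrt
  exact Finset.single_le_sum (f := fun j => dist (u j) (v j) ^ 2)
    (fun j _ => sq_nonneg _) (Finset.mem_univ i)

lemma cell_dist (s : ℝ) (hs : 0 < s) (u v : EuclideanSpace ℝ (Fin d))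
    (h : ∀ i, ⌊u i / s⌋ = ⌊v i / s⌋) : dist u v ≤ (d + 1) * s := by
  rw [EuclideanSpace.dist_eq]
  have hcoord : ∀ i, dist (u i) (v i) ^ 2 ≤ s ^ 2 := by
    intro i
    have h1 : |u i / s - v i / s| < 1 := Int.abs_sub_lt_one_of_floor_eq_floor (h i)
    have h2 : |u i - v i| < s := by
      have : u i / s - v i / s = (u i - v i) / s := by ring
      rw [this, abs_div, abs_of_pos hs, div_lt_one hs] at h1
      exact h1
    rw [Real.dist_eq]
    nlinarith [abs_nonneg (u i - v i)]
  have hsum : ∑ i, dist (u i) (v i) ^ 2 ≤ (d : ℝ) * s ^ 2 := by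
    calc ∑ i, dist (u i) (v i) ^ 2 ≤ ∑ _i : Fin d, s ^ 2 :=
          Finset.sum_le_sum (fun i _ => hcoord i)
      _ = (d : ℝ) * s ^ 2 := by simp [Finset.sum_const, Finset.card_univ]
  calc Real.sqrt (∑ i, dist (u i) (v i) ^ 2) ≤ Real.sqrt (((d : ℝ) + 1) ^ 2 * s ^ 2) := by
        apply Real.sqrt_le_sqrt
        have hd : (0:ℝ) ≤ ((d:ℝ) ^ 2 + d + 1) * s ^ 2 :=
          mul_nonneg (by positivity) (sq_nonneg s)
        nlinarith
    _ = (d + 1) * s := by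
        rw [← mul_pow, Real.sqrt_sq (by positivity)]

lemma floor_diff_le (x y B : ℝ) (h : |x - y| ≤ B) :
    |⌊x⌋ - ⌊y⌋| ≤ (⌈B⌉₊ : ℤ) + 1 := by
  have hB : 0 ≤ B := le_trans (abs_nonneg _) h
  have h1 : (⌊x⌋ : ℝ) - ⌊y⌋ ≤ B + 1 := by
    have a1 : (⌊x⌋ : ℝ) ≤ x := Int.floor_le x
    have a2 : y - 1 < ⌊y⌋ := Int.sub_one_lt_floor y
    have := abs_le.mp h
    linarith
  have h2 : (⌊y⌋ : ℝ) - ⌊x⌋ ≤ B + 1 := by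
    have a1 : (⌊y⌋ : ℝ) ≤ y := Int.floor_le y
    have a2 : x - 1 < ⌊x⌋ := Int.sub_one_lt_floor x
    have := abs_le.mp h
    linarith
  have hBc : B ≤ (⌈B⌉₊ : ℝ) := Nat.le_ceil B
  rw [abs_le]
  constructor <;>
  · rw [← Int.cast_le (R := ℝ)]
    push_cast
    linarith

lemma cell_count (s : ℝ) (hs : 0 < s) (R : ℝ) (Q : Finset (EuclideanSpace ℝ (Fin d)))
    (hQ : Set.InjOn (fun u : EuclideanSpace ℝ (Fin d) => fun i : Fin d => ⌊u i / s⌋) ↑Q)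
    (v : EuclideanSpace ℝ (Fin d)) :
    (Q.filter fun u => dist u v ≤ R).card ≤ (2 * (⌈R / s⌉₊ + 1) + 1) ^ d := by
  classical
  set K : ℕ := ⌈R / s⌉₊ + 1 with hK
  set box : Finset (Fin d → ℤ) :=
    Fintype.piFinset fun i => Finset.Icc (⌊v i / s⌋ - K) (⌊v i / s⌋ + K) with hbox
  have hcardbox : box.card = (2 * K + 1) ^ d := by
    rw [hbox, Fintype.card_piFinset]
    have : ∀ i : Fin d, (Finset.Icc (⌊v i / s⌋ - K) (⌊v i / s⌋ + K)).card = 2 * K + 1 := by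
      intro i
      rw [Int.card_Icc]
      omega
    rw [Finset.prod_congr rfl (fun i _ => this i), Finset.prod_const, Finset.card_univ,
      Fintype.card_fin]
  have hmaps : ∀ u ∈ Q.filter fun u => dist u v ≤ R,
      (fun i : Fin d => ⌊u i / s⌋) ∈ box := by
    intro u hu
    rw [Finset.mem_filter] at hu
    rw [hbox, Fintype.mem_piFinset]
    intro i
    have h1 : |u i - v i| ≤ R := le_trans (coord_le_dist u v i) hu.2
    have h2 : |u i / s - v i / s| ≤ R / s := by
      have heq : u i / s - v i / s = (u i - v i) / s := by ring
      rw [heq, abs_div, abs_of_pos hs]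
      gcongr
    have h3 := floor_diff_le (u i / s) (v i / s) (R / s) h2
    rw [abs_le] at h3
    rw [Finset.mem_Icc]
    omega
  calc (Q.filter fun u => dist u v ≤ R).card ≤ box.card := by
        apply Finset.card_le_card_of_injOn _ hmaps
        exact hQ.mono (by intro u hu; exact Finset.mem_of_mem_filter u hu)
    _ = (2 * K + 1) ^ d := hcardbox
end Geometry

/-- linear upper bound on persistent Betti numbers of Vietoris--Rips complexes. -/
theorem pBetti_vr_le_linear (d : ℕ) (ε : ℝ) (hε : 0 < ε) (p : ℕ) :
    ∃ c : ℕ, ∀ A : Finset (EuclideanSpace ℝ (Fin d)),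
      pBetti (vr d 1 A) (vr d (1 + ε) A) p ≤ ((c * A.card : ℕ) : Cardinal) := by
  classical
  set V := EuclideanSpace ℝ (Fin d) with hV
  set s : ℝ := ε / (d + 1) with hs_def
  have hs : 0 < s := by positivity
  set Kn : ℕ := ⌈(2 + 2 * ε) / s⌉₊ + 1 with hKn
  set N : ℕ := (2 * Kn + 1) ^ d with hN
  refine ⟨2 ^ N, fun A => ?_⟩
  set K := vr d 1 A with hK
  set L := vr d (1 + ε) A with hL
  set cell : V → Fin d → ℤ := fun v i => ⌊v i / s⌋ with hcell
  set rep : (Fin d → ℤ) → V := fun z => if h : ∃ a ∈ A, cell a = z then h.choose else 0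
    with hrep_def
  set q : V → V := fun v => rep (cell v) with hq_def
  -- basic properties of q
  have hrep : ∀ a ∈ A, q a ∈ A ∧ cell (q a) = cell a := by
    intro a ha
    have hex : ∃ b ∈ A, cell b = cell a := ⟨a, ha, rfl⟩
    have : q a = hex.choose := by
      rw [hq_def]
      simp only [hrep_def, dif_pos hex]
    rw [this]
    exact hex.choose_spec
  have hidem : ∀ a ∈ A, q (q a) = q a := by
    intro a ha
    show rep (cell (q a)) = q a
    rw [(hrep a ha).2]
  have hclose : ∀ a ∈ A, dist a (q a) ≤ ε := by
    intro a ha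
    have h2 := (hrep a ha).2
    have h3 : dist a (q a) ≤ ((d : ℝ) + 1) * s :=
      cell_dist s hs a (q a) (fun i => (congrFun h2 i).symm)
    calc dist a (q a) ≤ ((d : ℝ) + 1) * s := h3
      _ = ε := by
          rw [hs_def]
          field_simp
  -- the goodness predicate
  set P : Finset V → Prop := fun σ => ↑σ ⊆ (↑A : Set V) ∧ ∀ u ∈ σ, ∀ v ∈ σ,
    dist u v ≤ 2 + 2 * ε ∧ dist (q u) (q v) ≤ 2 + 2 * ε ∧ dist u (q v) ≤ 2 + 2 * ε with hP
  have hP1 : ∀ a ∈ A.toList, ∀ σ : Finset V, P σ →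
      P (σ.image (fun v => if v = a then q a else v)) := by
    intro a hal σ hσ
    obtain ⟨hσA, hσd⟩ := hσ
    have haA : a ∈ A := Finset.mem_toList.mp hal
    have hfa : ∀ u ∈ σ, ((if u = a then q a else u) = u ∨ (if u = a then q a else u) = q u)
        ∧ q (if u = a then q a else u) = q u := by
      intro u hu
      by_cases h : u = a
      · subst h
        rw [if_pos rfl]
        exact ⟨Or.inr rfl, hidem u haA⟩
      · rw [if_neg h]
        exact ⟨Or.inl rfl, rfl⟩
    constructor
    · intro w hw
      simp only [Finset.coe_image, Set.mem_image, Finset.mem_coe] at hw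
      obtain ⟨u, hu, rfl⟩ := hw
      by_cases h : u = a
      · rw [if_pos h]
        exact (hrep a haA).1
      · rw [if_neg h]
        exact hσA hu
    · intro u' hu' v' hv'
      obtain ⟨u, hu, rfl⟩ := Finset.mem_image.mp hu'
      obtain ⟨v, hv, rfl⟩ := Finset.mem_image.mp hv'
      obtain ⟨hd1, hd2, hd3⟩ := hσd u hu v hv
      obtain ⟨-, -, hd3'⟩ := hσd v hv u hu
      obtain ⟨hcase_u, hq_u⟩ := hfa u hu
      obtain ⟨hcase_v, hq_v⟩ := hfa v hv
      refine ⟨?_, ?_, ?_⟩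
      · rcases hcase_u with h | h <;> rcases hcase_v with h' | h' <;> rw [h, h']
        exacts [hd1, hd3, by rw [dist_comm]; exact hd3', hd2]
      · rw [hq_u, hq_v]; exact hd2
      · rw [hq_v]
        rcases hcase_u with h | h <;> rw [h]
        exacts [hd3, hd2]
  have hP2 : ∀ a ∈ A.toList, ∀ σ : Finset V, P σ → a ∈ σ → q a ∉ σ → insert (q a) σ ∈ L := by
    intro a hal σ hσ haσ hqaσ
    obtain ⟨hσA, hσd⟩ := hσ
    have haA : a ∈ A := Finset.mem_toList.mp hal
    refine ⟨Finset.insert_nonempty _ _, ?_, ?_⟩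
    · rw [Finset.coe_insert]
      exact Set.insert_subset ((hrep a haA).1) hσA
    · intro x hx y hy
      have h2e : 2 + 2 * ε = 2 * (1 + ε) := by ring
      rcases Finset.mem_insert.mp hx with rfl | hx' <;>
        rcases Finset.mem_insert.mp hy with rfl | hy'
      · simp
        positivity
      · rw [dist_comm, ← h2e]
        exact (hσd y hy' a haσ).2.2
      · rw [← h2e]
        exact (hσd x hx' a haσ).2.2
      · rw [← h2e]
        exact (hσd x hx' y hy').1
  -- the image point set and the target simplex set
  set Q : Finset V := A.image q with hQ
  have hfixQ : ∀ u ∈ Q, q u = u := by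
    intro u hu
    obtain ⟨a, ha, rfl⟩ := Finset.mem_image.mp hu
    exact hidem a ha
  have hQinj : Set.InjOn (fun u : V => fun i : Fin d => ⌊u i / s⌋) ↑Q := by
    intro u hu u' hu' heq
    have h1 : q u = q u' := by
      show rep (cell u) = rep (cell u')
      have : cell u = cell u' := heq
      rw [this]
    rw [hfixQ u hu, hfixQ u' hu'] at h1
    exact h1
  set T : Finset (Finset V) :=
    Q.biUnion (fun v => ((Q.filter fun u => dist u v ≤ 2 + 2 * ε).powerset).image (insert v))
    with hT
  have hTcard : T.card ≤ 2 ^ N * A.card := by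
    calc T.card
        ≤ ∑ v ∈ Q, ((Q.filter fun u => dist u v ≤ 2 + 2 * ε).powerset.image (insert v)).card :=
          Finset.card_biUnion_le
      _ ≤ ∑ _v ∈ Q, 2 ^ N := by
          apply Finset.sum_le_sum
          intro v _
          calc ((Q.filter fun u => dist u v ≤ 2 + 2 * ε).powerset.image (insert v)).card
              ≤ (Q.filter fun u => dist u v ≤ 2 + 2 * ε).powerset.card := Finset.card_image_le
            _ = 2 ^ (Q.filter fun u => dist u v ≤ 2 + 2 * ε).card := Finset.card_powerset _
            _ ≤ 2 ^ N := by
                apply Nat.pow_le_pow_right (by norm_num)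
                exact cell_count s hs (2 + 2 * ε) Q hQinj v
      _ = Q.card * 2 ^ N := by rw [Finset.sum_const, smul_eq_mul]
      _ ≤ A.card * 2 ^ N := Nat.mul_le_mul_right _ Finset.card_image_le
      _ = 2 ^ N * A.card := Nat.mul_comm _ _
  -- every cycle in K is homologous (in L) to a chain supported on T
  have hle : Submodule.map (bdriesIn L p).mkQ (cyclesIn K p)
      ≤ Submodule.map (bdriesIn L p).mkQ
          (Finsupp.supported (ZMod 2) (ZMod 2) (↑T : Set (Finset V))) := by
    rintro x ⟨z, hz, rfl⟩
    obtain ⟨hz1, hzk⟩ := Submodule.mem_inf.mp hz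
    have hzcyc : bdry V z = 0 := LinearMap.mem_ker.mp hzk
    have hzmem := (Finsupp.mem_supported (ZMod 2) z).mp hz1
    have hzsupp : ∀ σ ∈ z.support, σ.card = p + 1 ∧ P σ := by
      intro σ hσ
      have hmem : σ ∈ K ∧ σ.card = p + 1 := hzmem hσ
      obtain ⟨⟨hne, hsub, hdist⟩, hcard⟩ := hmem
      refine ⟨hcard, hsub, ?_⟩
      intro u hu v hv
      have huA : u ∈ A := hsub hu
      have hvA : v ∈ A := hsub hv
      have h1 : dist u v ≤ 2 := by
        have := hdist u hu v hv
        linarith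
      have h2 : dist v (q v) ≤ ε := hclose v hvA
      have h3 : dist u (q u) ≤ ε := hclose u huA
      refine ⟨by linarith, ?_, ?_⟩
      · calc dist (q u) (q v) ≤ dist (q u) u + dist u (q v) := dist_triangle _ _ _
          _ ≤ dist (q u) u + (dist u v + dist v (q v)) := by
              have := dist_triangle u v (q v)
              linarith
          _ ≤ ε + (2 + ε) := by
              rw [dist_comm (q u) u]
              linarith
          _ ≤ 2 + 2 * ε := by linarith
      · calc dist u (q v) ≤ dist u v + dist v (q v) := dist_triangle _ _ _
          _ ≤ 2 + ε := by linarith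
          _ ≤ 2 + 2 * ε := by linarith
    obtain ⟨w, hw, hweq⟩ := glue_homotopy q L P p A.toList hP1 hP2 z hzcyc hzsupp
    have hTsupp : ↑(pushL (glueMap q A.toList) p z).support ⊆ (↑T : Set (Finset V)) := by
      intro τ hτ
      rw [Finset.mem_coe] at hτ
      obtain ⟨σ, hσ, rfl, hcard⟩ := pushL_support (glueMap q A.toList) p z τ hτ
      obtain ⟨hσcard, hσA, hσd⟩ := hzsupp σ hσ
      have himg : σ.image (glueMap q A.toList) = σ.image q := by
        apply Finset.image_congr
        intro v hv
        exact glueMap_eq q A.toList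
          (fun b hb => hidem b (Finset.mem_toList.mp hb)) v
          (Finset.mem_toList.mpr (hσA hv))
      rw [himg] at hcard ⊢
      have hne : σ.Nonempty := Finset.card_pos.mp (by omega)
      obtain ⟨b, hb⟩ := hne
      have hbA : b ∈ A := hσA hb
      have hvQ : q b ∈ Q := Finset.mem_image.mpr ⟨b, hbA, rfl⟩
      rw [Finset.mem_coe, hT, Finset.mem_biUnion]
      refine ⟨q b, hvQ, ?_⟩
      rw [Finset.mem_image]
      refine ⟨(σ.image q).erase (q b), ?_, ?_⟩
      · rw [Finset.mem_powerset]
        intro u hu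
        obtain ⟨b', hb', rfl⟩ := Finset.mem_image.mp (Finset.mem_of_mem_erase hu)
        rw [Finset.mem_filter]
        exact ⟨Finset.mem_image.mpr ⟨b', hσA hb', rfl⟩, (hσd b' hb' b hb).2.1⟩
      · exact Finset.insert_erase (Finset.mem_image.mpr ⟨b, hb, rfl⟩)
    refine ⟨pushL (glueMap q A.toList) p z, (Finsupp.mem_supported (ZMod 2) _).mpr hTsupp, ?_⟩
    rw [Submodule.mkQ_apply, Submodule.mkQ_apply, Submodule.Quotient.eq]
    have hsub : pushL (glueMap q A.toList) p z - z = bdry V w := by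
      rw [sub_eq_add_neg, negeq]
      exact hweq
    rw [hsub]
    exact ⟨w, hw, rfl⟩
  -- conclude by rank comparison
  have hrank2 : Module.rank (ZMod 2)
      (Finsupp.supported (ZMod 2) (ZMod 2) (↑T : Set (Finset V))) = (T.card : Cardinal) := by
    rw [LinearEquiv.rank_eq (Finsupp.supportedEquivFinsupp (R := ZMod 2) (M := ZMod 2)
      (↑T : Set (Finset V))), rank_finsupp_self]
    simp [Cardinal.mk_coe_finset]
  calc pBetti K L p
      = Module.rank (ZMod 2) (Submodule.map (bdriesIn L p).mkQ (cyclesIn K p)) := rfl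
    _ ≤ Module.rank (ZMod 2) (Submodule.map (bdriesIn L p).mkQ
          (Finsupp.supported (ZMod 2) (ZMod 2) (↑T : Set (Finset V)))) := Submodule.rank_mono hle
    _ ≤ Module.rank (ZMod 2)
          (Finsupp.supported (ZMod 2) (ZMod 2) (↑T : Set (Finset V))) := rank_map_le _ _
    _ = (T.card : Cardinal) := hrank2
    _ ≤ ((2 ^ N * A.card : ℕ) : Cardinal) := by
        exact_mod_cast Nat.cast_le.mpr hTcard
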